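/- arXiv:math/0611703 — 2 statements merged into one kernel-verified Lean document; each statement's English description precedes it below -/
import Mathlib

section
/- For every real q with 0 < q < 1 and every nonzero complex number z, the Ramanujan function satisfies |A_q(z)| ≤ (|z|/√q)^{1/2} · exp(−(log|z|)²/(4 log q)) / (q;q)_∞. (Note log q < 0, so the exponential factor is a Gaussian in log|z|.) -/
/-- The finite q-Pochhammer symbol `(a;q)_n = ∏_{j=0}^{n-1} (1 - a q^j)` in `ℂ`,
with real base `q`. -/
noncomputable def qPochC (q : ℝ) (a : ℂ) (n : ℕ) : ℂ :=
  ∏ j ∈ Finset.range n, (1 - a * (q : ℂ) ^ j)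

/-- The infinite q-Pochhammer symbol `(a;q)_∞ = ∏_{j=0}^{∞} (1 - a q^j)` in `ℝ`. -/
noncomputable def qPochInfR (q a : ℝ) : ℝ :=
  ∏' j : ℕ, (1 - a * q ^ j)

/-- The Ramanujan function (q-Airy function)
`A_q(z) = Σ_{k=0}^∞ q^{k²} (−z)^k / (q;q)_k`. -/
noncomputable def ramanujanAq (q : ℝ) (z : ℂ) : ℂ :=
  ∑' k : ℕ, (q : ℂ) ^ (k ^ 2) * (-z) ^ k / qPochC q q k

/-
Completing the square in the exponent gives `q^{k²} r^k ≤ G q^k` for every `k`, where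
`G = (r/√q)^{1/2} exp(-(log r)²/(4 log q))` is the maximum over real `k` of `q^{k²-k} r^k`.
Hence `|A_q(z)| ≤ G ∑_k q^k/(q;q)_k`, and the partial sums of this series telescope to
`1/(q;q)_n`, so it sums to `1/(q;q)_∞` (Euler).
-/

open Finset Filter Topology

lemma mul_sq_add_mul_le_of_neg {t : ℝ} (ht : t < 0) (b x : ℝ) :
    t * x ^ 2 + b * x ≤ -b ^ 2 / (4 * t) := by
  rw [le_div_iff_of_neg (by linarith)]
  nlinarith [sq_nonneg (2 * t * x + b)]

lemma pow_sq_mul_pow_le_gaussian {q r : ℝ} (hq0 : 0 < q) (hq1 : q < 1) (hr : 0 < r) (k : ℕ) :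
    q ^ (k ^ 2) * r ^ k ≤
      (r / Real.sqrt q) ^ ((1 : ℝ) / 2) * Real.exp (-Real.log r ^ 2 / (4 * Real.log q)) *
        q ^ k := by
  have ht : Real.log q < 0 := Real.log_neg hq0 hq1
  have hexp {x : ℝ} (hx : 0 < x) (n : ℕ) : x ^ n = Real.exp (n * Real.log x) := by
    rw [Real.exp_nat_mul, Real.exp_log hx]
  have hsqrt :
      (r / Real.sqrt q) ^ ((1 : ℝ) / 2) = Real.exp (Real.log r / 2 - Real.log q / 4) := by
    rw [Real.rpow_def_of_pos (div_pos hr (Real.sqrt_pos.2 hq0)),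
      Real.log_div hr.ne' (Real.sqrt_pos.2 hq0).ne', Real.log_sqrt hq0.le]
    ring_nf
  rw [hsqrt, hexp hq0, hexp hr, hexp hq0, ← Real.exp_add, ← Real.exp_add, ← Real.exp_add,
    Real.exp_le_exp]
  have hsq := mul_sq_add_mul_le_of_neg ht (Real.log r - Real.log q) k
  have hcomplete : -(Real.log r - Real.log q) ^ 2 / (4 * Real.log q) =
      Real.log r / 2 - Real.log q / 4 + -Real.log r ^ 2 / (4 * Real.log q) := by
    field_simp [ht.ne]
    ring
  rw [hcomplete] at hsq
  push_cast
  linarith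

lemma mul_pow_lt_one {q a : ℝ} (hq0 : 0 ≤ q) (hq1 : q ≤ 1) (ha : a < 1) (j : ℕ) :
    a * q ^ j < 1 := by
  rcases le_or_gt 0 a with ha0 | ha0
  · exact (mul_le_of_le_one_right ha0 (pow_le_one₀ hq0 hq1)).trans_lt ha
  · exact (mul_nonpos_of_nonpos_of_nonneg ha0.le (pow_nonneg hq0 j)).trans_lt one_pos

noncomputable def qPochR (q a : ℝ) (n : ℕ) : ℝ :=
  ∏ j ∈ range n, (1 - a * q ^ j)

lemma qPochR_succ (q a : ℝ) (n : ℕ) : qPochR q a (n + 1) = qPochR q a n * (1 - a * q ^ n) :=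
  prod_range_succ _ n

lemma qPochC_ofReal (q a : ℝ) (n : ℕ) : qPochC q a n = qPochR q a n := by
  simp [qPochC, qPochR]

lemma qPochR_pos {q a : ℝ} (hq0 : 0 ≤ q) (hq1 : q ≤ 1) (ha : a < 1) (n : ℕ) :
    0 < qPochR q a n :=
  prod_pos fun j _ => sub_pos.2 (mul_pow_lt_one hq0 hq1 ha j)

lemma hasProd_one_sub_mul_pow {q a : ℝ} (hq0 : 0 ≤ q) (hq1 : q < 1) (ha : a < 1) :
    HasProd (fun j => 1 - a * q ^ j) (Real.exp (∑' j, Real.log (1 - a * q ^ j))) := by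
  have hgeom : Summable fun j : ℕ => -a * q ^ j :=
    (summable_geometric_of_lt_one hq0 hq1).mul_left (-a)
  refine Real.hasProd_of_hasSum_log (fun j => sub_pos.2 (mul_pow_lt_one hq0 hq1.le ha j)) ?_
  simpa [sub_eq_add_neg] using (Real.summable_log_one_add_of_summable hgeom).hasSum

lemma qPochInfR_pos {q a : ℝ} (hq0 : 0 ≤ q) (hq1 : q < 1) (ha : a < 1) : 0 < qPochInfR q a := by
  rw [qPochInfR, (hasProd_one_sub_mul_pow hq0 hq1 ha).tprod_eq]
  exact Real.exp_pos _

lemma tendsto_qPochR {q a : ℝ} (hq0 : 0 ≤ q) (hq1 : q < 1) (ha : a < 1) :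
    Tendsto (qPochR q a) atTop (𝓝 (qPochInfR q a)) := by
  have h := hasProd_one_sub_mul_pow hq0 hq1 ha
  rw [qPochInfR, h.tprod_eq]
  exact h.tendsto_prod_nat

lemma sum_range_succ_pow_div_qPochR {q : ℝ} (hq0 : 0 ≤ q) (hq1 : q < 1) (n : ℕ) :
    ∑ k ∈ range (n + 1), q ^ k / qPochR q q k = (qPochR q q n)⁻¹ := by
  induction n with
  | zero => simp [qPochR]
  | succ n ih =>
    have hPn := (qPochR_pos hq0 hq1.le hq1 n).ne'
    have hfac : 1 - q * q ^ n ≠ 0 := (sub_pos.2 (mul_pow_lt_one hq0 hq1.le hq1 n)).ne'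
    rw [sum_range_succ, ih, qPochR_succ]
    field_simp
    ring

lemma hasSum_pow_div_qPochR {q : ℝ} (hq0 : 0 ≤ q) (hq1 : q < 1) :
    HasSum (fun k => q ^ k / qPochR q q k) (qPochInfR q q)⁻¹ := by
  rw [hasSum_iff_tendsto_nat_of_nonneg
    fun k => div_nonneg (pow_nonneg hq0 k) (qPochR_pos hq0 hq1.le hq1 k).le,
    ← tendsto_add_atTop_iff_nat 1]
  simp only [sum_range_succ_pow_div_qPochR hq0 hq1]
  exact (tendsto_qPochR hq0 hq1 hq1).inv₀ (qPochInfR_pos hq0 hq1 hq1).ne'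

/-- For `0 < q < 1` and every nonzero complex `z`,
`|A_q(z)| ≤ (|z|/√q)^{1/2} · exp(−(log|z|)²/(4 log q)) / (q;q)_∞`. -/
theorem abs_ramanujanAq_le_gaussian (q : ℝ) (hq0 : 0 < q) (hq1 : q < 1) (z : ℂ) (hz : z ≠ 0) :
    ‖ramanujanAq q z‖ ≤
      (‖z‖ / Real.sqrt q) ^ ((1 : ℝ) / 2) *
        Real.exp (-(Real.log ‖z‖) ^ 2 / (4 * Real.log q)) / qPochInfR q q := by
  have hr : 0 < ‖z‖ := norm_pos_iff.mpr hz
  set G := (‖z‖ / Real.sqrt q) ^ ((1 : ℝ) / 2) *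
    Real.exp (-(Real.log ‖z‖) ^ 2 / (4 * Real.log q))
  have hterm (k : ℕ) :
      ‖(q : ℂ) ^ (k ^ 2) * (-z) ^ k / qPochC q q k‖ ≤ G * (q ^ k / qPochR q q k) := by
    have hP := qPochR_pos hq0.le hq1.le hq1 k
    rw [qPochC_ofReal, norm_div, norm_mul, norm_pow, norm_pow, norm_neg, Complex.norm_real,
      Complex.norm_real, Real.norm_of_nonneg hq0.le, Real.norm_of_nonneg hP.le, ← mul_div_assoc]
    exact div_le_div_of_nonneg_right (pow_sq_mul_pow_le_gaussian hq0 hq1 hr k) hP.le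
  rw [div_eq_mul_inv]
  exact tsum_of_norm_bounded ((hasSum_pow_div_qPochR hq0.le hq1).mul_left G) hterm
end

section
/- For every fixed complex number z, lim_{q→1⁻} A_q((1−q)z) = e^{−z}; that is, as q tends to 1 from below, the Ramanujan function evaluated at the scaled argument (1−q)z converges to exp(−z). -/
/-- Auxiliary regularized term: `(-z)^k q^{k²} ∏_{j<k} (1+q+⋯+q^j)⁻¹`. -/
noncomputable def gAux (z : ℂ) (k : ℕ) (q : ℝ) : ℂ :=
  (-z) ^ k * (q : ℂ) ^ (k ^ 2) *
    ∏ j ∈ Finset.range k, (∑ i ∈ Finset.range (j + 1), (q : ℂ) ^ i)⁻¹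

lemma gAux_sum_pos {q : ℝ} (hq : q ∈ Set.Ioo (0:ℝ) 1) (j : ℕ) :
    0 < ∑ i ∈ Finset.range (j + 1), q ^ i :=
  Finset.sum_pos (fun i _ => pow_pos hq.1 i) ⟨0, Finset.mem_range.2 (Nat.succ_pos j)⟩

lemma gAux_sum_ne_zero {q : ℝ} (hq : q ∈ Set.Ioo (0:ℝ) 1) (j : ℕ) :
    (∑ i ∈ Finset.range (j + 1), (q : ℂ) ^ i) ≠ 0 := by
  have : (∑ i ∈ Finset.range (j + 1), (q : ℂ) ^ i)
      = ((∑ i ∈ Finset.range (j + 1), q ^ i : ℝ) : ℂ) := by push_cast; ring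
  rw [this]
  exact_mod_cast (gAux_sum_pos hq j).ne'

/-- Term-by-term identity on `(0,1)`. -/
lemma term_eq_gAux (z : ℂ) {q : ℝ} (hq : q ∈ Set.Ioo (0:ℝ) 1) (k : ℕ) :
    (q : ℂ) ^ (k ^ 2) * (-((1 - (q : ℂ)) * z)) ^ k / qPochC q q k = gAux z k q := by
  have hq1 : (1 : ℂ) - (q : ℂ) ≠ 0 := by
    have : (1 : ℝ) - q ≠ 0 := by linarith [hq.2]
    exact_mod_cast (by push_cast; exact_mod_cast this : ((1 - q : ℝ) : ℂ) ≠ 0)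
  have hS : ∀ j, (∑ i ∈ Finset.range (j + 1), (q : ℂ) ^ i) ≠ 0 := gAux_sum_ne_zero hq
  have h1 : qPochC q q k
      = (1 - (q : ℂ)) ^ k * ∏ j ∈ Finset.range k, (∑ i ∈ Finset.range (j + 1), (q : ℂ) ^ i) := by
    unfold qPochC
    calc ∏ j ∈ Finset.range k, (1 - (q:ℂ) * (q:ℂ) ^ j)
        = ∏ j ∈ Finset.range k, ((1 - (q:ℂ)) * ∑ i ∈ Finset.range (j + 1), (q : ℂ) ^ i) := by
          refine Finset.prod_congr rfl fun j _ => ?_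
          have := geom_sum_mul (q : ℂ) (j + 1)
          have hpow : ((q : ℂ)) ^ (j + 1) = (q : ℂ) * (q : ℂ) ^ j := by ring
          linear_combination this + hpow
      _ = _ := by rw [Finset.prod_mul_distrib, Finset.prod_const, Finset.card_range]
  have hprod : (∏ j ∈ Finset.range k, (∑ i ∈ Finset.range (j + 1), (q : ℂ) ^ i)) ≠ 0 :=
    Finset.prod_ne_zero_iff.2 fun j _ => hS j
  rw [h1]
  unfold gAux
  rw [Finset.prod_inv_distrib]
  have hneg : (-((1 - (q : ℂ)) * z)) ^ k = (1 - (q : ℂ)) ^ k * (-z) ^ k := by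
    rw [← mul_pow]; ring_nf
  rw [hneg]
  field_simp

/-- Uniform bound on `(0,1)`. -/
lemma gAux_norm_le (z : ℂ) {q : ℝ} (hq : q ∈ Set.Ioo (0:ℝ) 1) (k : ℕ) :
    ‖gAux z k q‖ ≤ ‖z‖ ^ k / (Nat.factorial k) := by
  obtain ⟨hq0, hq1⟩ := hq
  have hSnorm : ∀ j, ‖(∑ i ∈ Finset.range (j + 1), (q : ℂ) ^ i)⁻¹‖
      = (∑ i ∈ Finset.range (j + 1), q ^ i)⁻¹ := by
    intro j
    have : (∑ i ∈ Finset.range (j + 1), (q : ℂ) ^ i)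
        = ((∑ i ∈ Finset.range (j + 1), q ^ i : ℝ) : ℂ) := by push_cast; ring
    rw [this, norm_inv, Complex.norm_real, Real.norm_of_nonneg (le_of_lt (gAux_sum_pos ⟨hq0, hq1⟩ j))]
  have hnorm : ‖gAux z k q‖ = ‖z‖ ^ k * q ^ (k ^ 2) *
      ∏ j ∈ Finset.range k, (∑ i ∈ Finset.range (j + 1), q ^ i)⁻¹ := by
    unfold gAux
    rw [norm_mul, norm_mul, norm_pow, norm_pow, norm_neg, Complex.norm_real,
      Real.norm_of_nonneg hq0.le, norm_prod]
    simp_rw [hSnorm]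
  rw [hnorm]
  -- key: ∏ sums ≥ k! * q^(k²)
  have hkey : (Nat.factorial k : ℝ) * q ^ (k ^ 2)
      ≤ ∏ j ∈ Finset.range k, (∑ i ∈ Finset.range (j + 1), q ^ i) := by
    have : ∀ j ∈ Finset.range k, ((j : ℝ) + 1) * q ^ k ≤ ∑ i ∈ Finset.range (j + 1), q ^ i := by
      intro j hj
      have : ∀ i ∈ Finset.range (j + 1), q ^ k ≤ q ^ i := by
        intro i hi
        exact pow_le_pow_of_le_one hq0.le hq1.le
          (le_of_lt (lt_of_lt_of_le (Finset.mem_range.1 hi) (Finset.mem_range.1 hj)))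
      calc ((j : ℝ) + 1) * q ^ k = ∑ _i ∈ Finset.range (j + 1), q ^ k := by
            rw [Finset.sum_const]; push_cast [Finset.card_range]; ring
        _ ≤ ∑ i ∈ Finset.range (j + 1), q ^ i := Finset.sum_le_sum this
    calc (Nat.factorial k : ℝ) * q ^ (k ^ 2)
        = ∏ j ∈ Finset.range k, (((j : ℝ) + 1) * q ^ k) := by
          rw [Finset.prod_mul_distrib, Finset.prod_const, Finset.card_range, ← pow_mul]
          rw [show (∏ j ∈ Finset.range k, ((j : ℝ) + 1)) = (Nat.factorial k : ℝ) by
            rw [← Finset.prod_range_add_one_eq_factorial k]; push_cast; ring]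
          ring_nf
      _ ≤ _ := Finset.prod_le_prod (fun j _ => by positivity) this
  have hppos : (0:ℝ) < ∏ j ∈ Finset.range k, (∑ i ∈ Finset.range (j + 1), q ^ i) :=
    Finset.prod_pos fun j _ => gAux_sum_pos ⟨hq0, hq1⟩ j
  have hinv : (∏ j ∈ Finset.range k, (∑ i ∈ Finset.range (j + 1), q ^ i)⁻¹)
      ≤ ((Nat.factorial k : ℝ) * q ^ (k ^ 2))⁻¹ := by
    rw [Finset.prod_inv_distrib]
    exact inv_anti₀ (by positivity) hkey
  calc ‖z‖ ^ k * q ^ (k ^ 2) * (∏ j ∈ Finset.range k, (∑ i ∈ Finset.range (j + 1), q ^ i)⁻¹)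
      ≤ ‖z‖ ^ k * q ^ (k ^ 2) * ((Nat.factorial k : ℝ) * q ^ (k ^ 2))⁻¹ := by
        apply mul_le_mul_of_nonneg_left hinv (by positivity)
    _ = ‖z‖ ^ k / (Nat.factorial k) := by
        rw [mul_inv]
        have : (q : ℝ) ^ (k ^ 2) ≠ 0 := by positivity
        field_simp
  
/-- Pointwise limit. -/
lemma gAux_tendsto (z : ℂ) (k : ℕ) :
    Filter.Tendsto (gAux z k) (nhdsWithin 1 (Set.Ioo 0 1))
      (nhds ((-z) ^ k / (Nat.factorial k))) := by
  have hq : Filter.Tendsto (fun q : ℝ => (q : ℂ)) (nhdsWithin 1 (Set.Ioo 0 1)) (nhds 1) := by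
    have := (Complex.continuous_ofReal.tendsto 1).mono_left
      (nhdsWithin_le_nhds (s := Set.Ioo (0:ℝ) 1))
    simpa using this
  have hlim : Filter.Tendsto (gAux z k) (nhdsWithin 1 (Set.Ioo 0 1))
      (nhds ((-z) ^ k * (1 : ℂ) ^ (k ^ 2) *
        ∏ j ∈ Finset.range k, (∑ i ∈ Finset.range (j + 1), (1 : ℂ) ^ i)⁻¹)) := by
    apply Filter.Tendsto.mul
    · exact (tendsto_const_nhds.mul (hq.pow _))
    · apply tendsto_finset_prod
      intro j _
      refine Filter.Tendsto.inv₀ ?_ ?_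
      · exact tendsto_finset_sum _ fun i _ => hq.pow i
      · simpa using Nat.cast_add_one_ne_zero (R := ℂ) j
  convert hlim using 2
  have : (∏ j ∈ Finset.range k, (∑ i ∈ Finset.range (j + 1), (1 : ℂ) ^ i)⁻¹)
      = ((Nat.factorial k : ℂ))⁻¹ := by
    rw [Finset.prod_inv_distrib]
    congr 1
    rw [← Finset.prod_range_add_one_eq_factorial k]
    push_cast
    exact Finset.prod_congr rfl fun j _ => by simp
  rw [this]
  simp [div_eq_mul_inv]

/-- For every complex `z`, `A_q((1−q)z) → e^{−z}` as `q → 1⁻` (with `0 < q < 1`). -/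
theorem ramanujanAq_tendsto_exp (z : ℂ) :
    Filter.Tendsto (fun q : ℝ => ramanujanAq q ((1 - (q : ℂ)) * z))
      (nhdsWithin 1 (Set.Ioo 0 1)) (nhds (Complex.exp (-z))) := by
  have hexp : Complex.exp (-z) = ∑' k : ℕ, (-z) ^ k / (Nat.factorial k) := by
    rw [Complex.exp_eq_exp_ℂ, NormedSpace.exp_eq_tsum_div]
  rw [hexp]
  have key : Filter.Tendsto (fun q : ℝ => ∑' k : ℕ, gAux z k q)
      (nhdsWithin 1 (Set.Ioo 0 1)) (nhds (∑' k : ℕ, (-z) ^ k / (Nat.factorial k))) := by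
    apply tendsto_tsum_of_dominated_convergence
      (bound := fun k => ‖z‖ ^ k / (Nat.factorial k))
    · exact Real.summable_pow_div_factorial ‖z‖
    · exact fun k => gAux_tendsto z k
    · filter_upwards [self_mem_nhdsWithin] with q hq k
      exact gAux_norm_le z hq k
  apply key.congr'
  filter_upwards [self_mem_nhdsWithin] with q hq
  unfold ramanujanAq
  exact tsum_congr fun k => (term_eq_gAux z hq k).symm
end
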